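/- For every integer n ≥ 3, the identity A_{0,1} A_{0,2} A_{0,3} ⋯ A_{0,n} = z_n^{-2} holds in the pure braid group P_n. -/

import Mathlib

namespace Braids

/-- The braid relations on the generators `σ_1, …, σ_{n-1}` (indexed by `Fin (n-1)`). -/
def braidRels (n : ℕ) : Set (FreeGroup (Fin (n - 1))) :=
  {r | (∃ i j : Fin (n - 1), (i : ℕ) + 1 = (j : ℕ) ∧
          r = .of i * .of j * .of i * (.of j * .of i * .of j)⁻¹) ∨
       (∃ i j : Fin (n - 1), (i : ℕ) + 2 ≤ (j : ℕ) ∧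
          r = .of i * .of j * (.of j * .of i)⁻¹)}

/-- The Artin braid group on `n` strands, presented by generators and the braid relations. -/
abbrev BraidGroup (n : ℕ) := PresentedGroup (braidRels n)

/-- The Artin generator `σ_{i+1}` (0-indexed). -/
def σ {n : ℕ} (i : Fin (n - 1)) : BraidGroup n := PresentedGroup.of i

/-- The transposition `(i, i+1)` associated to the generator `σ`. -/
def swapGen (n : ℕ) (i : Fin (n - 1)) : Equiv.Perm (Fin n) :=
  Equiv.swap ⟨i.1, by have := i.2; omega⟩ ⟨i.1 + 1, by have := i.2; omega⟩

private lemma swap_braid {α : Type*} [DecidableEq α] {a b c : α}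
    (hab : a ≠ b) (hac : a ≠ c) (hbc : b ≠ c) :
    Equiv.swap a b * Equiv.swap b c * Equiv.swap a b =
      Equiv.swap b c * Equiv.swap a b * Equiv.swap b c := by
  have h1 := Equiv.swap_apply_apply (Equiv.swap a b) b c
  rw [Equiv.swap_apply_right, Equiv.swap_apply_of_ne_of_ne hac.symm hbc.symm,
    Equiv.swap_inv] at h1
  have h2 := Equiv.swap_apply_apply (Equiv.swap b c) a b
  rw [Equiv.swap_apply_of_ne_of_ne hab hac, Equiv.swap_apply_left, Equiv.swap_inv] at h2
  rw [← h1, ← h2]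

private lemma swap_commute {α : Type*} [DecidableEq α] {a b c d : α}
    (hca : c ≠ a) (hcb : c ≠ b) (hda : d ≠ a) (hdb : d ≠ b) :
    Equiv.swap a b * Equiv.swap c d = Equiv.swap c d * Equiv.swap a b := by
  have h := Equiv.swap_apply_apply (Equiv.swap a b) c d
  rw [Equiv.swap_apply_of_ne_of_ne hca hcb, Equiv.swap_apply_of_ne_of_ne hda hdb,
    Equiv.swap_inv] at h
  nth_rewrite 1 [h]
  rw [← mul_assoc, ← mul_assoc, Equiv.swap_mul_self, one_mul]

theorem braidRels_hold (n : ℕ) :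
    ∀ r ∈ braidRels n, FreeGroup.lift (swapGen n) r = 1 := by
  rintro r (⟨i, j, hij, rfl⟩ | ⟨i, j, hij, rfl⟩) <;>
    simp only [map_mul, map_inv, FreeGroup.lift_apply_of, mul_inv_eq_one]
  · have hj : swapGen n j =
        Equiv.swap (⟨i.1 + 1, by have := i.2; have := j.2; omega⟩ : Fin n)
          ⟨i.1 + 2, by have := j.2; omega⟩ := by
      unfold swapGen
      congr 1 <;> simp only [Fin.mk.injEq] <;> omega
    rw [hj]
    exact swap_braid (by simp only [ne_eq, Fin.mk.injEq]; omega)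
      (by simp only [ne_eq, Fin.mk.injEq]; omega) (by simp only [ne_eq, Fin.mk.injEq]; omega)
  · exact swap_commute (by simp only [ne_eq, Fin.mk.injEq]; omega)
      (by simp only [ne_eq, Fin.mk.injEq]; omega) (by simp only [ne_eq, Fin.mk.injEq]; omega)
      (by simp only [ne_eq, Fin.mk.injEq]; omega)

/-- The canonical projection from the braid group to the symmetric group,
sending `σ_i` to the transposition `(i, i+1)`. -/
def toPerm (n : ℕ) : BraidGroup n →* Equiv.Perm (Fin n) :=
  PresentedGroup.toGroup (braidRels_hold n)

/-- The pure braid group on `n` strands, as a subgroup of the braid group. -/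
def PureBraid (n : ℕ) : Subgroup (BraidGroup n) := (toPerm n).ker

/-- The pure braid group `P n` as a group. -/
abbrev P (n : ℕ) := ↥(PureBraid n)

/-- The generator `σ_k` (1-indexed, junk value `1` for out-of-range `k`). -/
def sig (n k : ℕ) : BraidGroup n :=
  if h : 1 ≤ k ∧ k ≤ n - 1 then σ ⟨k - 1, by omega⟩ else 1

/-- The conjugating word `σ_{j-1} σ_{j-2} ⋯ σ_{i+1}`. -/
def chain (n i j : ℕ) : BraidGroup n :=
  (((List.range (j - i - 1)).map (fun t => sig n (j - 1 - t))).prod)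

/-- The pure braid generator `A_{i,j} = σ_{j-1} ⋯ σ_{i+1} σ_i² σ_{i+1}⁻¹ ⋯ σ_{j-1}⁻¹`
(for `1 ≤ i < j ≤ n`; junk values otherwise), as an element of the braid group. -/
def Agen (n i j : ℕ) : BraidGroup n := chain n i j * (sig n i) ^ 2 * (chain n i j)⁻¹

theorem toPerm_sig_sq (n k : ℕ) : (toPerm n (sig n k)) ^ 2 = 1 := by
  unfold sig
  split
  · show (toPerm n (PresentedGroup.of _)) ^ 2 = 1
    rw [toPerm, PresentedGroup.toGroup.of]
    simp [swapGen, sq, Equiv.swap_mul_self]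
  · simp

theorem Agen_mem (n i j : ℕ) : Agen n i j ∈ PureBraid n := by
  have : toPerm n (Agen n i j) = 1 := by
    unfold Agen
    rw [map_mul, map_mul, map_inv, map_pow, toPerm_sig_sq, mul_one, mul_inv_cancel]
  exact this

/-- `A_{i,j}` extended symmetrically: `A_{j,i} := A_{i,j}` and `A_{i,i} := 1`. -/
def ASym (n i j : ℕ) : BraidGroup n := if i = j then 1 else Agen n (min i j) (max i j)

theorem ASym_mem (n i j : ℕ) : ASym n i j ∈ PureBraid n := by
  unfold ASym
  split
  · exact one_mem _
  · exact Agen_mem n _ _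

/-- `A_{0,j} := (A_{1,j} A_{2,j} ⋯ A_{n,j})⁻¹`, as an element of the braid group. -/
def A0gen (n j : ℕ) : BraidGroup n :=
  (((List.range n).map (fun t => ASym n (t + 1) j)).prod)⁻¹

theorem A0gen_mem (n j : ℕ) : A0gen n j ∈ PureBraid n := by
  refine inv_mem (list_prod_mem ?_)
  intro x hx
  simp only [List.mem_map] at hx
  obtain ⟨t, -, rfl⟩ := hx
  exact ASym_mem n _ _

/-- The pure braid generator `A_{i,j}` (with the conventions `A_{j,i} = A_{i,j}`, `A_{i,i} = 1`),
as an element of the pure braid group. -/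
def A (n i j : ℕ) : P n := ⟨ASym n i j, ASym_mem n i j⟩

/-- The element `A_{0,j} = (A_{1,j} A_{2,j} ⋯ A_{n,j})⁻¹` of the pure braid group. -/
def A₀ (n j : ℕ) : P n := ⟨A0gen n j, A0gen_mem n j⟩

/-- The full twist `z_n = A_{1,2} (A_{1,3} A_{2,3}) ⋯ (A_{1,n} A_{2,n} ⋯ A_{n-1,n})`. -/
def fullTwist (n : ℕ) : P n :=
  (((List.range (n - 1)).map
    (fun jt => ((List.range (jt + 1)).map (fun it => A n (it + 1) (jt + 2))).prod)).prod)

/-- The reindexing map associated with removing the `k`-th strand. -/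
def phi (k m : ℕ) : ℕ := if m < k then m else m - 1

/-- `d` is the `k`-th strand-removal homomorphism `P n → P (n-1)`: it is determined by
`d (A_{i,j}) = 1` if `k ∈ {i, j}`, and `d (A_{i,j}) = A_{φ(i),φ(j)}` otherwise. -/
def IsStrandRemoval (n k : ℕ) (d : P n →* P (n - 1)) : Prop :=
  ∀ i j : ℕ, 1 ≤ i → i < j → j ≤ n →
    d (A n i j) = if k = i ∨ k = j then 1 else A (n - 1) (phi k i) (phi k j)

/-- The Brunnian subgroup `Brun_n = ∩_{k=1}^n Ker (d_k)`, for a family `d` of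
strand-removal homomorphisms. -/
def Brunnian (n : ℕ) (d : ℕ → (P n →* P (n - 1))) : Subgroup (P n) :=
  ⨅ k ∈ Finset.Icc 1 n, (d k).ker

/-- `θ` is the automorphism `θ_n` of `P n`: it fixes `A_{i,j}` for `2 ≤ i < j ≤ n` and sends
`A_{1,j}` to `A_{1,j}⁻¹ A_{0,j} A_{1,j}`. -/
def IsTheta (n : ℕ) (θ : MulAut (P n)) : Prop :=
  (∀ i j : ℕ, 2 ≤ i → i < j → j ≤ n → θ (A n i j) = A n i j) ∧
  (∀ j : ℕ, 1 < j → j ≤ n → θ (A n 1 j) = (A n 1 j)⁻¹ * A₀ n j * A n 1 j)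

/-- The homomorphism `∂_n := d_1 ∘ θ_n : P n → P (n-1)`. -/
def del (n : ℕ) (d : ℕ → (P n →* P (n - 1))) (θ : MulAut (P n)) : P n →* P (n - 1) :=
  (d 1).comp θ.toMonoidHom

/-- `Z_n := Brun_n ∩ Ker ∂_n`. -/
def Zgrp (n : ℕ) (d : ℕ → (P n →* P (n - 1))) (θ : MulAut (P n)) : Subgroup (P n) :=
  Brunnian n d ⊓ (del n d θ).ker

/-- `Bd_n := ∂_{n+1}(Brun_{n+1})`, built from strand-removal data on `n+1` strands. -/
def Bd (n : ℕ) (D : ℕ → (P (n + 1) →* P n)) (Θ : MulAut (P (n + 1))) : Subgroup (P n) :=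
  Subgroup.map (del (n + 1) D Θ) (Brunnian (n + 1) D)

/-- `w` is the automorphism `w_n` of `P n`: it fixes `A_{i,j}` for `1 ≤ i < j ≤ n-1` and sends
`A_{i,n}` to `A_{i,n} A_{0,i} A_{i,n}⁻¹` for `1 ≤ i ≤ n-1`. -/
def IsW (n : ℕ) (w : MulAut (P n)) : Prop :=
  (∀ i j : ℕ, 1 ≤ i → i < j → j ≤ n - 1 → w (A n i j) = A n i j) ∧
  (∀ i : ℕ, 1 ≤ i → i ≤ n - 1 → w (A n i n) = A n i n * A₀ n i * (A n i n)⁻¹)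

/-!
Let `δ = σ₁ σ₂ ⋯ σ_{n-1}` and `ε = σ_{n-1} ⋯ σ₂ σ₁`. Conjugation by `δ` sends `σ_k` to `σ_{k+1}`
for `k < n - 1`, and `δ²` sends `σ_{n-1}` to `σ₁`. Writing the `A_{i,j}` as words in the `σ_k`,
the column product `A_{1,j} ⋯ A_{n,j} = A_{0,j}⁻¹` becomes `(σ_{j-1} ⋯ σ₁) δ (σ_{n-1} ⋯ σ_j)`, so `δ`
conjugates `A_{0,j}⁻¹` to `A_{0,j+1}⁻¹`. As `A_{0,1}⁻¹ = δ ε`, the product `A_{0,1} ⋯ A_{0,n}`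
collapses to `(δⁿ εⁿ)⁻¹`. Finally `z_n = δⁿ`, because its `j`-th factor `A_{1,j} ⋯ A_{j-1,j}` is
`(σ_{j-1} ⋯ σ₁)(σ₁ ⋯ σ_{j-1})`, and `εⁿ = δⁿ`.
-/

theorem _root_.SemiconjBy.list_prod_map {M ι : Type*} [Monoid M] {g : M} {f f' : ι → M} {l : List ι}
    (h : ∀ i ∈ l, SemiconjBy g (f i) (f' i)) :
    SemiconjBy g (l.map f).prod (l.map f').prod := by
  induction l with
  | nil => exact SemiconjBy.one_right g
  | cons i l ih =>
    exact (h i List.mem_cons_self).mul_right (ih fun j hj => h j (List.mem_cons_of_mem i hj))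

/-- If `C (t + 1) = g * C t * g⁻¹`, then `C (m - 1) * ⋯ * C 0 = g ^ m * (g⁻¹ * C 0) ^ m`. -/
theorem list_prod_map_range_inv_of_semiconjBy {G : Type*} [Group G] {g e : G} {C : ℕ → G}
    {m : ℕ} (h0 : C 0 = g * e) (hC : ∀ t, t + 1 < m → SemiconjBy g (C t) (C (t + 1))) :
    ((List.range m).map fun t => (C t)⁻¹).prod = (g ^ m * e ^ m)⁻¹ := by
  induction m with
  | zero => simp
  | succ m ih =>
    have hconj : SemiconjBy (g ^ m) (C 0) (C m) := by
      clear ih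
      induction m with
      | zero => rw [pow_zero]; exact SemiconjBy.one_left _
      | succ m ih' =>
        rw [pow_succ']
        exact (hC m (by omega)).mul_left (ih' fun t ht => hC t (by omega))
    rw [List.range_succ, List.map_append, List.prod_append, ih fun t ht => hC t (by omega),
      List.map_singleton, List.prod_singleton, ← mul_inv_rev, ← mul_assoc, ← hconj.eq, h0,
      pow_succ, pow_succ']
    group

variable {n : ℕ}

theorem σ_braid {i j : Fin (n - 1)} (hij : (i : ℕ) + 1 = j) :
    σ (n := n) i * σ j * σ i = σ j * σ i * σ j := by
  have h := PresentedGroup.one_of_mem (rels := braidRels n) (Or.inl ⟨i, j, hij, rfl⟩)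
  simp only [map_mul, map_inv, mul_inv_eq_one] at h
  exact h

theorem σ_commute {i j : Fin (n - 1)} (hij : (i : ℕ) + 2 ≤ j) :
    σ (n := n) i * σ j = σ j * σ i := by
  have h := PresentedGroup.one_of_mem (rels := braidRels n) (Or.inr ⟨i, j, hij, rfl⟩)
  simp only [map_mul, map_inv, mul_inv_eq_one] at h
  exact h

theorem sig_braid {k : ℕ} (h1 : 1 ≤ k) (h2 : k + 1 ≤ n - 1) :
    sig n k * sig n (k + 1) * sig n k = sig n (k + 1) * sig n k * sig n (k + 1) := by
  rw [sig, sig, dif_pos ⟨h1, by omega⟩, dif_pos ⟨by omega, h2⟩]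
  exact σ_braid (by simp only; omega)

theorem commute_sig_sig {i j : ℕ} (h : i + 2 ≤ j) : Commute (sig n i) (sig n j) := by
  unfold sig
  split_ifs with hi hj
  · exact σ_commute (by simp only; omega)
  all_goals simp

/-- Reading braid words backwards; it exchanges `ascWord` and `descWord` below. -/
def reverse (n : ℕ) : BraidGroup n →* (BraidGroup n)ᵐᵒᵖ :=
  PresentedGroup.toGroup (f := fun i => MulOpposite.op (σ i)) <| by
    rintro r (⟨i, j, hij, rfl⟩ | ⟨i, j, hij, rfl⟩) <;>
      simp only [map_mul, map_inv, FreeGroup.lift_apply_of, mul_inv_eq_one, ← MulOpposite.op_mul,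
        MulOpposite.op_inj, ← mul_assoc]
    exacts [σ_braid hij, (σ_commute hij).symm]

theorem unop_reverse_sig (k : ℕ) : (reverse n (sig n k)).unop = sig n k := by
  unfold sig
  split_ifs
  · exact congrArg MulOpposite.unop (PresentedGroup.toGroup.of _)
  · simp

def ascWord (n a b : ℕ) : BraidGroup n :=
  ((List.range (b + 1 - a)).map fun t => sig n (a + t)).prod

def descWord (n a b : ℕ) : BraidGroup n :=
  ((List.range (b + 1 - a)).map fun t => sig n (b - t)).prod

theorem unop_reverse_ascWord (a b : ℕ) : (reverse n (ascWord n a b)).unop = descWord n a b := by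
  rw [ascWord, unop_map_list_prod, List.map_map, ← List.map_reverse, List.range_eq_range',
    List.reverse_range', List.map_map, descWord]
  refine congrArg List.prod (List.map_congr_left fun t ht => ?_)
  simp only [Function.comp_apply, unop_reverse_sig, List.mem_range] at ht ⊢
  congr 1
  omega

theorem unop_reverse_descWord (a b : ℕ) : (reverse n (descWord n a b)).unop = ascWord n a b := by
  rw [descWord, unop_map_list_prod, List.map_map, ← List.map_reverse, List.range_eq_range',
    List.reverse_range', List.map_map, ascWord]
  refine congrArg List.prod (List.map_congr_left fun t ht => ?_)
  simp only [Function.comp_apply, unop_reverse_sig, List.mem_range] at ht ⊢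
  congr 1
  omega

theorem ascWord_of_lt {a b : ℕ} (h : b < a) : ascWord n a b = 1 := by
  rw [ascWord, Nat.sub_eq_zero_of_le h, List.range_zero, List.map_nil, List.prod_nil]

theorem descWord_of_lt {a b : ℕ} (h : b < a) : descWord n a b = 1 := by
  rw [← unop_reverse_ascWord, ascWord_of_lt h, map_one, MulOpposite.unop_one]

theorem ascWord_self (a : ℕ) : ascWord n a a = sig n a := by
  simp [ascWord]

theorem descWord_self (a : ℕ) : descWord n a a = sig n a := by
  rw [← unop_reverse_ascWord, ascWord_self, unop_reverse_sig]

theorem ascWord_eq_mul_sig {a b : ℕ} (h : a ≤ b) (hb : 1 ≤ b) :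
    ascWord n a b = ascWord n a (b - 1) * sig n b := by
  rw [ascWord, ascWord, show b + 1 - a = b - 1 + 1 - a + 1 by omega, List.range_succ,
    List.map_append, List.prod_append, List.map_singleton, List.prod_singleton]
  congr 2
  omega

theorem ascWord_eq_sig_mul {a b : ℕ} (h : a ≤ b) :
    ascWord n a b = sig n a * ascWord n (a + 1) b := by
  rw [ascWord, ascWord, show b + 1 - a = b - a + 1 by omega, List.range_succ_eq_map,
    List.map_cons, List.prod_cons, List.map_map, show b + 1 - (a + 1) = b - a by omega]
  refine congrArg (_ * List.prod ·) (List.map_congr_left fun t _ => ?_)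
  simp only [Function.comp_apply, Nat.succ_eq_add_one]
  congr 1
  omega

theorem ascWord_mul_ascWord {a b c : ℕ} (h1 : a ≤ c + 1) (h2 : c ≤ b) :
    ascWord n a c * ascWord n (c + 1) b = ascWord n a b := by
  induction b, h2 using Nat.le_induction with
  | base => rw [ascWord_of_lt c.lt_succ_self, mul_one]
  | succ b hb ih =>
    rw [ascWord_eq_mul_sig (a := c + 1) (by omega) (by omega), ← mul_assoc, Nat.add_sub_cancel,
      ih, ascWord_eq_mul_sig (b := b + 1) (by omega) (by omega), Nat.add_sub_cancel]

theorem descWord_eq_sig_mul {a b : ℕ} (h : a ≤ b) (hb : 1 ≤ b) :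
    descWord n a b = sig n b * descWord n a (b - 1) := by
  simpa only [map_mul, MulOpposite.unop_mul, unop_reverse_ascWord, unop_reverse_sig] using
    congrArg (fun x => (reverse n x).unop) (ascWord_eq_mul_sig (n := n) h hb)

theorem descWord_eq_mul_sig {a b : ℕ} (h : a ≤ b) :
    descWord n a b = descWord n (a + 1) b * sig n a := by
  simpa only [map_mul, MulOpposite.unop_mul, unop_reverse_ascWord, unop_reverse_sig] using
    congrArg (fun x => (reverse n x).unop) (ascWord_eq_sig_mul (n := n) h)

theorem commute_sig_ascWord {k a b : ℕ} (h : ∀ t, a ≤ t → t ≤ b → t + 2 ≤ k ∨ k + 2 ≤ t) :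
    Commute (sig n k) (ascWord n a b) := by
  refine Commute.list_prod_right _ _ fun x hx => ?_
  obtain ⟨t, ht, rfl⟩ := List.mem_map.mp hx
  rcases h (a + t) (by omega) (by simp at ht; omega) with h' | h'
  exacts [(commute_sig_sig h').symm, commute_sig_sig h']

theorem commute_sig_descWord {k a b : ℕ} (h : ∀ t, a ≤ t → t ≤ b → t + 2 ≤ k ∨ k + 2 ≤ t) :
    Commute (sig n k) (descWord n a b) := by
  show _ = _
  simpa only [map_mul, MulOpposite.unop_mul, unop_reverse_ascWord, unop_reverse_sig] using
    (congrArg (fun x => (reverse n x).unop) (commute_sig_ascWord (n := n) h).eq).symm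

theorem semiconjBy_ascWord_sig {a b k : ℕ} (hk : 1 ≤ k) (hak : a ≤ k) (hkb : k < b)
    (hb : b ≤ n - 1) : SemiconjBy (ascWord n a b) (sig n k) (sig n (k + 1)) := by
  obtain ⟨j, rfl⟩ : ∃ j, k = j + 1 := ⟨k - 1, by omega⟩
  have hsplit : ascWord n a b =
      ascWord n a j * (sig n (j + 1) * sig n (j + 2)) * ascWord n (j + 3) b := by
    rw [← ascWord_mul_ascWord (c := j + 2) (by omega) (by omega),
      ← ascWord_mul_ascWord (c := j) (b := j + 2) (by omega) (by omega),
      ascWord_eq_sig_mul (a := j + 1) (by omega), ascWord_self (j + 2)]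
  have hbraid : SemiconjBy (sig n (j + 1) * sig n (j + 2)) (sig n (j + 1)) (sig n (j + 2)) := by
    rw [SemiconjBy, sig_braid (by omega) (by omega), mul_assoc]
  rw [hsplit]
  exact SemiconjBy.mul_left
    (SemiconjBy.mul_left (commute_sig_ascWord fun t _ _ => by omega).symm hbraid)
    (commute_sig_ascWord fun t _ _ => by omega).symm

theorem semiconjBy_descWord_sig {a b k : ℕ} (hk : 1 ≤ k) (hak : a ≤ k) (hkb : k < b)
    (hb : b ≤ n - 1) : SemiconjBy (descWord n a b) (sig n (k + 1)) (sig n k) := by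
  show _ = _
  simpa only [map_mul, MulOpposite.unop_mul, unop_reverse_ascWord, unop_reverse_sig] using
    (congrArg (fun x => (reverse n x).unop) (semiconjBy_ascWord_sig (n := n) hk hak hkb hb)).symm

theorem semiconjBy_ascWord_shift {g : BraidGroup n} {a b : ℕ}
    (h : ∀ k, a ≤ k → k ≤ b → SemiconjBy g (sig n k) (sig n (k + 1))) :
    SemiconjBy g (ascWord n a b) (ascWord n (a + 1) (b + 1)) := by
  rw [ascWord, ascWord, Nat.add_sub_add_right]
  refine SemiconjBy.list_prod_map fun t ht => ?_
  rw [add_right_comm]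
  exact h _ (by omega) (by simp at ht; omega)

theorem semiconjBy_descWord_shift {g : BraidGroup n} {a b : ℕ}
    (h : ∀ k, a ≤ k → k ≤ b → SemiconjBy g (sig n k) (sig n (k + 1))) :
    SemiconjBy g (descWord n a b) (descWord n (a + 1) (b + 1)) := by
  rw [descWord, descWord, Nat.add_sub_add_right]
  refine SemiconjBy.list_prod_map fun t ht => ?_
  simp only [List.mem_range] at ht
  rw [show b + 1 - t = b - t + 1 by omega]
  exact h _ (by omega) (by omega)

theorem sig_mul_ascWord_one {m : ℕ} (hm2 : 2 ≤ m) (hm : m ≤ n - 1) :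
    sig n m * ascWord n 1 m = ascWord n 1 (m - 1) * (sig n m * sig n (m - 1)) := by
  have hbraid := sig_braid (n := n) (k := m - 1) (by omega) (by omega)
  rw [Nat.sub_add_cancel (by omega : 1 ≤ m)] at hbraid
  have hcomm : Commute (sig n m) (ascWord n 1 (m - 2)) :=
    commute_sig_ascWord fun t _ _ => by omega
  have hlast : ascWord n 1 (m - 1) = ascWord n 1 (m - 2) * sig n (m - 1) := by
    rw [ascWord_eq_mul_sig (by omega) (by omega), show m - 1 - 1 = m - 2 by omega]
  rw [ascWord_eq_mul_sig (b := m) (by omega) (by omega), hlast]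
  calc sig n m * (ascWord n 1 (m - 2) * sig n (m - 1) * sig n m)
      = ascWord n 1 (m - 2) * (sig n m * sig n (m - 1) * sig n m) := by
        rw [← mul_assoc, ← mul_assoc, hcomm.eq]; simp only [mul_assoc]
    _ = ascWord n 1 (m - 2) * sig n (m - 1) * (sig n m * sig n (m - 1)) := by
        rw [← hbraid]; simp only [mul_assoc]

theorem descWord_mul_ascWord_one {c m : ℕ} (hc : 1 ≤ c) (hcm : c ≤ m) (hm : m ≤ n - 1) :
    descWord n (c + 1) m * ascWord n 1 m = ascWord n 1 (m - 1) * descWord n c m := by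
  rcases hcm.eq_or_lt with rfl | hlt
  · rw [descWord_of_lt c.lt_succ_self, one_mul, descWord_self, ascWord_eq_mul_sig hc hc]
  have hshift :
      SemiconjBy (ascWord n 1 m) (descWord n c (m - 2)) (descWord n (c + 1) (m - 1)) := by
    have := semiconjBy_descWord_shift (a := c) (b := m - 2) fun k _ _ =>
      semiconjBy_ascWord_sig (n := n) (a := 1) (b := m) (by omega) (by omega) (by omega) hm
    rwa [show m - 2 + 1 = m - 1 by omega] at this
  have hhead : descWord n c m = sig n m * sig n (m - 1) * descWord n c (m - 2) := by
    rw [descWord_eq_sig_mul (by omega) (by omega),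
      descWord_eq_sig_mul (b := m - 1) (by omega) (by omega), show m - 1 - 1 = m - 2 by omega,
      mul_assoc]
  calc descWord n (c + 1) m * ascWord n 1 m
      = sig n m * (descWord n (c + 1) (m - 1) * ascWord n 1 m) := by
        rw [descWord_eq_sig_mul (by omega) (by omega), mul_assoc]
    _ = sig n m * ascWord n 1 m * descWord n c (m - 2) := by rw [← hshift.eq, mul_assoc]
    _ = ascWord n 1 (m - 1) * descWord n c m := by
        rw [sig_mul_ascWord_one (by omega) hm, hhead]; simp only [mul_assoc]

theorem ascWord_one_pow {m k : ℕ} (hk : k ≤ m) (hm : m ≤ n - 1) :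
    ascWord n 1 m ^ k = ascWord n 1 (m - 1) ^ k * descWord n (m + 1 - k) m := by
  induction k with
  | zero => rw [pow_zero, pow_zero, one_mul, descWord_of_lt (by omega)]
  | succ k ih =>
    rw [pow_succ, ih (by omega), mul_assoc, show m + 1 - k = m - k + 1 by omega,
      descWord_mul_ascWord_one (by omega) (by omega) hm, ← mul_assoc, ← pow_succ,
      show m + 1 - (k + 1) = m - k by omega]

theorem descWord_one_pow {m k : ℕ} (hk : k ≤ m) (hm : m ≤ n - 1) :
    descWord n 1 m ^ k = ascWord n (m + 1 - k) m * descWord n 1 (m - 1) ^ k := by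
  simpa only [map_mul, map_pow, MulOpposite.unop_mul, MulOpposite.unop_pow,
    unop_reverse_ascWord, unop_reverse_descWord] using
    congrArg (fun x => (reverse n x).unop) (ascWord_one_pow (n := n) hk hm)

theorem commute_descWord_mul_ascWord_sig {m k : ℕ} (hk : 1 ≤ k) (hkm : k < m)
    (hm : m ≤ n - 1) : Commute (descWord n 1 m * ascWord n 1 m) (sig n k) :=
  (semiconjBy_descWord_sig hk hk hkm hm).mul_left (semiconjBy_ascWord_sig hk hk hkm hm)

theorem descWord_one_pow_succ {m : ℕ} (hm : m ≤ n - 1) :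
    descWord n 1 m ^ (m + 1) = ascWord n 1 m ^ (m + 1) := by
  induction m with
  | zero => rw [descWord_of_lt one_pos, ascWord_of_lt one_pos]
  | succ m ih =>
    have hcomm :
        Commute (descWord n 1 (m + 1) * ascWord n 1 (m + 1)) (ascWord n 1 m ^ (m + 1)) :=
      .pow_right (.list_prod_right _ _ fun x hx => by
        obtain ⟨t, ht, rfl⟩ := List.mem_map.mp hx
        exact commute_descWord_mul_ascWord_sig (by omega) (by simp at ht; omega) hm) _
    have hdesc := descWord_one_pow (n := n) (le_refl (m + 1)) hm
    have hasc := ascWord_one_pow (n := n) (le_refl (m + 1)) hm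
    rw [Nat.add_sub_cancel_left, Nat.add_sub_cancel] at hdesc hasc
    rw [pow_succ', hdesc, ih (by omega), ← mul_assoc, hcomm.eq, ← mul_assoc, ← hasc,
      ← pow_succ]

theorem chain_eq_descWord (i j : ℕ) : chain n i j = descWord n (i + 1) (j - 1) := by
  rw [chain, descWord, show j - 1 + 1 - (i + 1) = j - i - 1 by omega]

theorem Agen_succ {j k : ℕ} (h : j < k) :
    Agen n j (k + 1) = sig n k * Agen n j k * (sig n k)⁻¹ := by
  rw [Agen, Agen, chain_eq_descWord, chain_eq_descWord, Nat.add_sub_cancel,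
    descWord_eq_sig_mul (b := k) (by omega) (by omega)]
  group

theorem sig_mul_sig_sq_mul_inv {k : ℕ} (h1 : 1 ≤ k) (h2 : k + 1 ≤ n - 1) :
    sig n (k + 1) * sig n k ^ 2 * (sig n (k + 1))⁻¹ =
      (sig n k)⁻¹ * sig n (k + 1) ^ 2 * sig n k := by
  have h : sig n (k + 1) * sig n k * (sig n (k + 1))⁻¹ =
      (sig n k)⁻¹ * sig n (k + 1) * sig n k := by
    rw [mul_inv_eq_iff_eq_mul]
    simp only [mul_assoc]
    rw [eq_inv_mul_iff_mul_eq]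
    simpa only [mul_assoc] using sig_braid h1 h2
  have h' := conj_pow (i := 2) (a := (sig n k)⁻¹) (b := sig n (k + 1))
  rw [inv_inv] at h'
  rw [← conj_pow, h, h']

theorem Agen_eq_inv_descWord_conj {j k : ℕ} (hj : 1 ≤ j) (hjk : j < k) (hk : k ≤ n) :
    Agen n j k = (descWord n j (k - 2))⁻¹ * sig n (k - 1) ^ 2 * descWord n j (k - 2) := by
  induction k, hjk using Nat.le_induction with
  | base =>
    rw [Agen, chain_eq_descWord, descWord_of_lt (by omega), descWord_of_lt (by omega)]
    simp
  | succ k hjk ih =>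
    have hconj : sig n k * descWord n j (k - 2) * (sig n k)⁻¹ = descWord n j (k - 2) := by
      rw [(commute_sig_descWord fun t _ _ => by omega).eq, mul_inv_cancel_right]
    have hbraid := sig_mul_sig_sq_mul_inv (n := n) (k := k - 1) (by omega) (by omega)
    rw [Nat.sub_add_cancel (by omega : 1 ≤ k)] at hbraid
    rw [Agen_succ hjk, ih (by omega), Nat.add_sub_cancel, show k + 1 - 2 = k - 1 by omega,
      descWord_eq_sig_mul (b := k - 1) (by omega) (by omega), show k - 1 - 1 = k - 2 by omega]
    calc sig n k * ((descWord n j (k - 2))⁻¹ * sig n (k - 1) ^ 2 * descWord n j (k - 2)) *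
          (sig n k)⁻¹
        = (sig n k * descWord n j (k - 2) * (sig n k)⁻¹)⁻¹ *
          (sig n k * sig n (k - 1) ^ 2 * (sig n k)⁻¹) *
          (sig n k * descWord n j (k - 2) * (sig n k)⁻¹) := by group
      _ = (sig n (k - 1) * descWord n j (k - 2))⁻¹ * sig n k ^ 2 *
          (sig n (k - 1) * descWord n j (k - 2)) := by rw [hconj, hbraid]; group

theorem prod_Agen_column {r : ℕ} (hr : 1 ≤ r) (d : ℕ) :
    ((List.range d).map fun t => Agen n (r + t) (r + d)).prod =
      descWord n r (r + d - 1) * ascWord n r (r + d - 1) := by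
  induction d generalizing r with
  | zero =>
    rw [List.range_zero, List.map_nil, List.prod_nil, descWord_of_lt (by omega),
      ascWord_of_lt (by omega), one_mul]
  | succ d ih =>
    rw [List.range_succ_eq_map, List.map_cons, List.prod_cons, List.map_map]
    have htail :
        ((List.range d).map ((fun t => Agen n (r + t) (r + (d + 1))) ∘ Nat.succ)).prod =
          descWord n (r + 1) (r + d) * ascWord n (r + 1) (r + d) := by
      rw [← show r + 1 + d - 1 = r + d by omega, ← ih (by omega)]
      refine congrArg List.prod (List.map_congr_left fun t _ => ?_)
      simp only [Function.comp_apply]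
      congr 1 <;> omega
    rw [htail, Agen, chain_eq_descWord, show r + (d + 1) - 1 = r + d by omega,
      descWord_eq_mul_sig (a := r) (by omega), ascWord_eq_sig_mul (a := r) (by omega), sq]
    simp only [mul_assoc, inv_mul_cancel_left, add_zero]

theorem prod_Agen_row {j : ℕ} (hj : 1 ≤ j) (d : ℕ) (hd : j + d ≤ n) :
    ((List.range d).map fun t => Agen n j (j + 1 + t)).prod =
      ascWord n j (j + d - 1) * descWord n j (j + d - 1) := by
  induction d with
  | zero =>
    rw [List.range_zero, List.map_nil, List.prod_nil, descWord_of_lt (by omega),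
      ascWord_of_lt (by omega), one_mul]
  | succ d ih =>
    rw [List.range_succ, List.map_append, List.prod_append, ih (by omega), List.map_singleton,
      List.prod_singleton, Agen_eq_inv_descWord_conj (k := j + 1 + d) hj (by omega) (by omega),
      show j + 1 + d - 2 = j + d - 1 by omega, show j + 1 + d - 1 = j + d by omega,
      show j + (d + 1) - 1 = j + d by omega,
      ascWord_eq_mul_sig (b := j + d) (by omega) (by omega),
      descWord_eq_sig_mul (b := j + d) (by omega) (by omega), sq]
    simp only [mul_assoc, mul_inv_cancel_left]

theorem ASym_of_lt {i j : ℕ} (h : i < j) : ASym n i j = Agen n i j := by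
  rw [ASym, if_neg h.ne, min_eq_left h.le, max_eq_right h.le]

theorem ASym_of_gt {i j : ℕ} (h : j < i) : ASym n i j = Agen n j i := by
  rw [ASym, if_neg h.ne', min_eq_right h.le, max_eq_left h.le]

theorem inv_A0gen {j : ℕ} (h1 : 1 ≤ j) (h2 : j ≤ n) :
    (A0gen n j)⁻¹ = descWord n 1 (j - 1) * ascWord n 1 (n - 1) * descWord n j (n - 1) := by
  have hrange : List.range n =
      List.range (j - 1) ++ [j - 1] ++ (List.range (n - j)).map (j + ·) := by
    rw [← List.range_succ, Nat.succ_eq_add_one, Nat.sub_add_cancel h1, ← List.range_add,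
      Nat.add_sub_cancel' h2]
  have hcol : ((List.range (j - 1)).map fun t => ASym n (t + 1) j).prod =
      descWord n 1 (j - 1) * ascWord n 1 (j - 1) := by
    have hAgen := prod_Agen_column (n := n) le_rfl (j - 1)
    rw [show 1 + (j - 1) - 1 = j - 1 by omega] at hAgen
    rw [← hAgen]
    refine congrArg List.prod (List.map_congr_left fun t ht => ?_)
    rw [List.mem_range] at ht
    rw [ASym_of_lt (by omega)]
    congr 1 <;> omega
  have hrow : (((List.range (n - j)).map (j + ·)).map fun t => ASym n (t + 1) j).prod =
      ascWord n j (n - 1) * descWord n j (n - 1) := by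
    have hAgen := prod_Agen_row (n := n) h1 (n - j) (by omega)
    rw [show j + (n - j) - 1 = n - 1 by omega] at hAgen
    rw [← hAgen, List.map_map]
    refine congrArg List.prod (List.map_congr_left fun t _ => ?_)
    rw [Function.comp_apply, ASym_of_gt (by omega)]
    congr 1
    omega
  rw [A0gen, inv_inv, hrange, List.map_append, List.map_append, List.prod_append,
    List.prod_append, hcol, hrow, List.map_singleton, List.prod_singleton, ASym,
    if_pos (Nat.sub_add_cancel h1), mul_one,
    ← ascWord_mul_ascWord (a := 1) (c := j - 1) (b := n - 1) (by omega) (by omega),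
    Nat.sub_add_cancel h1]
  group

theorem semiconjBy_ascWord_sq_sig (hn : 2 ≤ n) :
    SemiconjBy (ascWord n 1 (n - 1) ^ 2) (sig n (n - 1)) (sig n 1) := by
  -- `δ = σ₁ X = Y σ_{n-1}` and `δ Y = X δ` give `δ² σ_{n-1} = σ₁ X δ σ_{n-1} = σ₁ δ²`.
  have hhead : ascWord n 1 (n - 1) = sig n 1 * ascWord n 2 (n - 1) :=
    ascWord_eq_sig_mul (by omega)
  have hlast : ascWord n 1 (n - 1) = ascWord n 1 (n - 2) * sig n (n - 1) := by
    rw [ascWord_eq_mul_sig (by omega) (by omega), show n - 1 - 1 = n - 2 by omega]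
  have hshift :
      SemiconjBy (ascWord n 1 (n - 1)) (ascWord n 1 (n - 2)) (ascWord n 2 (n - 1)) := by
    have := semiconjBy_ascWord_shift (a := 1) (b := n - 2) fun k _ _ =>
      semiconjBy_ascWord_sig (n := n) (a := 1) (b := n - 1) (by omega) (by omega) (by omega) le_rfl
    rwa [show n - 2 + 1 = n - 1 by omega] at this
  calc ascWord n 1 (n - 1) ^ 2 * sig n (n - 1)
      = sig n 1 * ascWord n 2 (n - 1) * ascWord n 1 (n - 1) * sig n (n - 1) := by
        rw [sq, ← hhead]
    _ = sig n 1 * (ascWord n 1 (n - 1) * (ascWord n 1 (n - 2) * sig n (n - 1))) := by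
        rw [← mul_assoc (ascWord n 1 (n - 1)), hshift.eq]; simp only [mul_assoc]
    _ = sig n 1 * ascWord n 1 (n - 1) ^ 2 := by rw [← hlast, sq]

theorem semiconjBy_ascWord_inv_A0gen {j : ℕ} (h1 : 1 ≤ j) (h2 : j ≤ n - 1) :
    SemiconjBy (ascWord n 1 (n - 1)) (A0gen n j)⁻¹ (A0gen n (j + 1))⁻¹ := by
  have hshift : ∀ c d, 1 ≤ c → d < n - 1 →
      SemiconjBy (ascWord n 1 (n - 1)) (descWord n c d) (descWord n (c + 1) (d + 1)) :=
    fun c d _ _ => semiconjBy_descWord_shift fun k _ _ =>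
      semiconjBy_ascWord_sig (by omega) (by omega) (by omega) le_rfl
  have hleft := hshift 1 (j - 1) le_rfl (by omega)
  have hright := hshift j (n - 2) h1 (by omega)
  rw [Nat.sub_add_cancel h1] at hleft
  rw [show n - 2 + 1 = n - 1 by omega] at hright
  have htail : descWord n j (n - 1) = sig n (n - 1) * descWord n j (n - 2) := by
    rw [descWord_eq_sig_mul (by omega) (by omega), show n - 1 - 1 = n - 2 by omega]
  rw [inv_A0gen h1 (by omega), inv_A0gen (by omega) (by omega), Nat.add_sub_cancel, htail,
    descWord_eq_mul_sig (a := 1) (b := j) h1]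
  show _ = _
  calc ascWord n 1 (n - 1) * (descWord n 1 (j - 1) * ascWord n 1 (n - 1) *
        (sig n (n - 1) * descWord n j (n - 2)))
      = descWord n (1 + 1) j * (ascWord n 1 (n - 1) ^ 2 * sig n (n - 1)) *
        descWord n j (n - 2) := by
        rw [sq]; simp only [← mul_assoc]; rw [hleft.eq]
    _ = descWord n (1 + 1) j * sig n 1 * ascWord n 1 (n - 1) *
        (ascWord n 1 (n - 1) * descWord n j (n - 2)) := by
        rw [(semiconjBy_ascWord_sq_sig (by omega)).eq, sq]; simp only [mul_assoc]
    _ = descWord n (1 + 1) j * sig n 1 * ascWord n 1 (n - 1) * descWord n (j + 1) (n - 1) *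
        ascWord n 1 (n - 1) := by rw [hright.eq]; simp only [mul_assoc]

theorem prod_A0gen :
    ((List.range n).map fun t => A0gen n (t + 1)).prod =
      (ascWord n 1 (n - 1) ^ n * descWord n 1 (n - 1) ^ n)⁻¹ := by
  rcases Nat.eq_zero_or_pos n with rfl | hn
  · simp
  have h := list_prod_map_range_inv_of_semiconjBy (m := n)
    (C := fun t => (A0gen n (t + 1))⁻¹) (g := ascWord n 1 (n - 1)) (e := descWord n 1 (n - 1))
    (by rw [inv_A0gen le_rfl hn, descWord_of_lt (by omega), one_mul])
    fun t ht => semiconjBy_ascWord_inv_A0gen (by omega) (by omega)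
  simpa only [inv_inv] using h

theorem prod_descWord_mul_ascWord {m : ℕ} (hm : m ≤ n - 1) :
    ((List.range m).map fun t => descWord n 1 (t + 1) * ascWord n 1 (t + 1)).prod =
      ascWord n 1 m ^ (m + 1) := by
  induction m with
  | zero => rw [List.range_zero, List.map_nil, List.prod_nil, ascWord_of_lt one_pos, one_pow]
  | succ m ih =>
    have hpow := ascWord_one_pow (n := n) (le_refl (m + 1)) hm
    rw [Nat.add_sub_cancel, Nat.add_sub_cancel_left] at hpow
    rw [List.range_succ, List.map_append, List.prod_append, ih (by omega), List.map_singleton,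
      List.prod_singleton, ← mul_assoc, ← hpow, ← pow_succ]

theorem coe_fullTwist : (fullTwist n : BraidGroup n) = ascWord n 1 (n - 1) ^ n := by
  rcases Nat.eq_zero_or_pos n with rfl | hn
  · rfl
  have hcols := prod_descWord_mul_ascWord (n := n) (m := n - 1) le_rfl
  rw [Nat.sub_add_cancel hn] at hcols
  rw [← hcols, fullTwist, SubmonoidClass.coe_list_prod, List.map_map]
  refine congrArg List.prod (List.map_congr_left fun jt hjt => ?_)
  rw [List.mem_range] at hjt
  have hcol := prod_Agen_column (n := n) le_rfl (jt + 1)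
  rw [Nat.add_sub_cancel_left] at hcol
  rw [Function.comp_apply, SubmonoidClass.coe_list_prod, List.map_map, ← hcol]
  refine congrArg List.prod (List.map_congr_left fun it hit => ?_)
  rw [List.mem_range] at hit
  show ASym n (it + 1) (jt + 2) = _
  rw [ASym_of_lt (by omega)]
  congr 1 <;> omega

theorem prod_A0_eq_fullTwist_neg_two_general (n : ℕ) :
    ((List.range n).map (fun t => A₀ n (t + 1))).prod = (fullTwist n ^ 2)⁻¹ := by
  have hpow : descWord n 1 (n - 1) ^ n = ascWord n 1 (n - 1) ^ n := by
    rcases Nat.eq_zero_or_pos n with rfl | hn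
    · rfl
    · simpa only [Nat.sub_add_cancel hn] using descWord_one_pow_succ (n := n) le_rfl
  apply Subtype.ext
  rw [SubmonoidClass.coe_list_prod, List.map_map, Subgroup.coe_inv, Subgroup.coe_pow,
    coe_fullTwist]
  refine prod_A0gen.trans ?_
  rw [hpow, sq]

/-- For `n ≥ 3`, the identity `A_{0,1} A_{0,2} ⋯ A_{0,n} = z_n⁻²` holds in `P n`. -/
theorem prod_A0_eq_fullTwist_neg_two (n : ℕ) (hn : 3 ≤ n) :
    ((List.range n).map (fun t => A₀ n (t + 1))).prod = (fullTwist n ^ 2)⁻¹ :=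
  prod_A0_eq_fullTwist_neg_two_general n

end Braids
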